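/- arXiv:1602.08109 — 5 statements merged into one kernel-verified Lean document; each statement's English description precedes it below -/
import Mathlib

section
/- Every preference profile (finite family of strict total orders) over a set A of m alternatives is (m−1)-Euclidean: there exists an embedding x of voters and alternatives into ℝ^(m−1) such that for every voter v and alternatives a, b, if v strictly prefers a to b then ‖x(v) − x(a)‖ < ‖x(v) − x(b)‖. In fact one may place the alternatives at the standard simplex vertices e_1, …, e_{m−1}, 0 and each voter at a suitable convex combination. -/
/-!
Put the alternatives at the vertices `0, e₁, …, e_{m-1}` of the standard simplex. For a point `p`,
`‖p - eᵢ‖² = ‖p‖² - 2 pᵢ + 1` and `‖p - 0‖² = ‖p‖²`, so the coordinates `pᵢ = 1/2 + sᵢ - s₀` make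
`‖p - vertex‖²` equal to `‖p‖² + 2 s₀ - 2 s(vertex)`: distances to the vertices order them exactly
as any prescribed score `s` does. Each voter scores an alternative by the number of alternatives
it beats.
-/

open Finset

section StrictOrder

variable {α : Type*} [Fintype α] (r : α → α → Prop) [IsStrictOrder α r] [DecidableRel r]

theorem card_filter_rel_lt_of_rel {a b : α} (hab : r a b) : #{c | r b c} < #{c | r a c} := by
  refine card_lt_card ((ssubset_iff_of_subset fun c hc => ?_).2 ⟨b, ?_, fun hb => ?_⟩)
  · simp only [mem_filter, mem_univ, true_and] at hc ⊢
    exact _root_.trans hab hc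
  · simpa using hab
  · simp only [mem_filter, mem_univ, true_and] at hb
    exact irrefl b hb

end StrictOrder

section Simplex

variable {ι : Type*} [Fintype ι] [DecidableEq ι]

noncomputable def simplexVertex : Option ι → EuclideanSpace ℝ ι
  | none => 0
  | some i => EuclideanSpace.single i 1

noncomputable def simplexPoint (s : Option ι → ℝ) : EuclideanSpace ℝ ι :=
  WithLp.toLp 2 fun i => 1 / 2 + s (some i) - s none

theorem norm_simplexPoint_sub_simplexVertex_sq (s : Option ι → ℝ) (o : Option ι) :
    ‖simplexPoint s - simplexVertex o‖ ^ 2 = ‖simplexPoint s‖ ^ 2 + 2 * (s none - s o) := by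
  cases o with
  | none => simp [simplexVertex]
  | some i =>
    have hi : simplexPoint s i = 1 / 2 + s (some i) - s none := rfl
    rw [simplexVertex, norm_sub_sq_real, EuclideanSpace.inner_single_right, hi,
      PiLp.norm_single, conj_trivial, one_mul, norm_one]
    ring

theorem norm_simplexPoint_sub_simplexVertex_lt_iff (s : Option ι → ℝ) (o o' : Option ι) :
    ‖simplexPoint s - simplexVertex o‖ < ‖simplexPoint s - simplexVertex o'‖ ↔ s o' < s o := by
  rw [← sq_lt_sq₀ (norm_nonneg _) (norm_nonneg _), norm_simplexPoint_sub_simplexVertex_sq,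
    norm_simplexPoint_sub_simplexVertex_sq]
  constructor <;> intro h <;> linarith

end Simplex

theorem stmt_5_general (m : ℕ) (Voter A : Type) [Fintype A]
    (hA : Fintype.card A = m)
    (pref : Voter → A → A → Prop) (hpref : ∀ v, IsStrictTotalOrder A (pref v)) :
    ∃ x : Voter ⊕ A → EuclideanSpace ℝ (Fin (m - 1)),
      ∀ v a b, pref v a b →
        ‖x (Sum.inl v) - x (Sum.inr a)‖ < ‖x (Sum.inl v) - x (Sum.inr b)‖ := by
  classical
  obtain ⟨f⟩ : Nonempty (A ↪ Option (Fin (m - 1))) :=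
    Function.Embedding.nonempty_of_card_le <| by
      simp only [Fintype.card_option, Fintype.card_fin]; omega
  let score (v : Voter) : Option (Fin (m - 1)) → ℝ :=
    Function.extend f (fun a => (#{c | pref v a c} : ℝ)) 0
  refine ⟨Sum.elim (fun v => simplexPoint (score v)) (fun a => simplexVertex (f a)),
    fun v a b hab => ?_⟩
  rw [Sum.elim_inl, Sum.elim_inr, Sum.elim_inr, norm_simplexPoint_sub_simplexVertex_lt_iff]
  simp only [score, f.injective.extend_apply]
  have := hpref v
  exact_mod_cast card_filter_rel_lt_of_rel (pref v) hab

/-- Every profile of strict total orders over m alternatives is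
(m−1)-Euclidean. -/
theorem stmt_5 (m : ℕ) (hm : 1 ≤ m) (Voter A : Type) [Fintype Voter] [Fintype A]
    (hA : Fintype.card A = m)
    (pref : Voter → A → A → Prop) (hpref : ∀ v, IsStrictTotalOrder A (pref v)) :
    ∃ x : Voter ⊕ A → EuclideanSpace ℝ (Fin (m - 1)),
      ∀ v a b, pref v a b →
        ‖x (Sum.inl v) - x (Sum.inr a)‖ < ‖x (Sum.inl v) - x (Sum.inr b)‖ :=
  stmt_5_general m Voter A hA pref hpref
end

section
/- Let S ⊆ {−,+}^n be a set of sign vectors containing the all-plus and all-minus vectors, and let V_S be the profile over alternatives {a_1, b_1, …, a_n, b_n} with one voter v_σ per σ ∈ S whose strict order satisfies {a_1,b_1} ≻ {a_2,b_2} ≻ ⋯ ≻ {a_n,b_n} and a_i ≻ b_i iff σ_i = +. If V_S is d-Euclidean, then S is d-realisable: there exist oriented hyperplanes h_1, …, h_n in ℝ^d such that every σ ∈ S is the sign vector of some point of ℝ^d (the point lying on the positive side of h_i iff σ_i = +). -/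
open scoped RealInnerProductSpace

section Bisector

variable {E : Type*} [NormedAddCommGroup E] [InnerProductSpace ℝ E]

theorem norm_sub_lt_norm_sub_iff_inner_lt (p a b : E) :
    ‖p - a‖ < ‖p - b‖ ↔ (‖a‖ ^ 2 - ‖b‖ ^ 2) / 2 < ⟪a - b, p⟫ := by
  rw [← sq_lt_sq₀ (norm_nonneg _) (norm_nonneg _), norm_sub_sq_real, norm_sub_sq_real,
    inner_sub_left, real_inner_comm p a, real_inner_comm p b]
  constructor <;> intro h <;> linarith

theorem norm_sub_lt_norm_sub_iff_inner_lt' (p a b : E) :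
    ‖p - b‖ < ‖p - a‖ ↔ ⟪a - b, p⟫ < (‖a‖ ^ 2 - ‖b‖ ^ 2) / 2 := by
  rw [norm_sub_lt_norm_sub_iff_inner_lt, ← neg_sub a b, inner_neg_left]
  constructor <;> intro h <;> linarith

end Bisector

theorem stmt_8_general (d n : ℕ) (S : Set (Fin n → Bool))
    (hplus : (fun _ => true) ∈ S)
    (x : {σ // σ ∈ S} ⊕ (Fin n × Bool) → EuclideanSpace ℝ (Fin d))
    (hx : ∀ (σ : {σ // σ ∈ S}) (i j : Fin n) (s t : Bool),
      (i < j ∨ (i = j ∧ s = σ.1 i ∧ t ≠ σ.1 i)) →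
      ‖x (Sum.inl σ) - x (Sum.inr (i, s))‖ < ‖x (Sum.inl σ) - x (Sum.inr (j, t))‖) :
    ∃ (c : Fin n → EuclideanSpace ℝ (Fin d)) (β : Fin n → ℝ),
      (∀ i, c i ≠ 0) ∧
      ∀ σ ∈ S, ∃ p : EuclideanSpace ℝ (Fin d),
        ∀ i, if σ i then β i < (inner ℝ (c i) p : ℝ) else (inner ℝ (c i) p : ℝ) < β i := by
  -- h_i is the bisector of the points of a_i and b_i, oriented towards a_i; voter σ realises σ.
  refine ⟨fun i => x (.inr (i, true)) - x (.inr (i, false)),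
    fun i => (‖x (.inr (i, true))‖ ^ 2 - ‖x (.inr (i, false))‖ ^ 2) / 2,
    fun i => ?_, fun σ hσ => ⟨x (.inl ⟨σ, hσ⟩), fun i => ?_⟩⟩
  · have hsep := hx ⟨_, hplus⟩ i i true false (.inr ⟨rfl, rfl, Bool.false_ne_true⟩)
    exact sub_ne_zero.mpr fun h => hsep.ne (by rw [h])
  · cases hσi : σ i
    · exact (norm_sub_lt_norm_sub_iff_inner_lt' _ _ _).mp
        (hx ⟨σ, hσ⟩ i i false true (.inr ⟨rfl, hσi.symm, by simp [hσi]⟩))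
    · exact (norm_sub_lt_norm_sub_iff_inner_lt _ _ _).mp
        (hx ⟨σ, hσ⟩ i i true false (.inr ⟨rfl, hσi.symm, by simp [hσi]⟩))

/-- If the profile V_S constructed from a sign-vector set S (containing the
all-plus and all-minus vectors; alternative a_i is (i, true), b_i is (i, false); voter σ
prefers (i,s) to (j,t) iff i < j, or i = j with s = σᵢ ≠ t) is d-Euclidean, then S is
d-realisable by an arrangement of n oriented affine hyperplanes. -/
theorem stmt_8 (d n : ℕ) (S : Set (Fin n → Bool))
    (hplus : (fun _ => true) ∈ S) (hminus : (fun _ => false) ∈ S)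
    (x : {σ // σ ∈ S} ⊕ (Fin n × Bool) → EuclideanSpace ℝ (Fin d))
    (hx : ∀ (σ : {σ // σ ∈ S}) (i j : Fin n) (s t : Bool),
      (i < j ∨ (i = j ∧ s = σ.1 i ∧ t ≠ σ.1 i)) →
      ‖x (Sum.inl σ) - x (Sum.inr (i, s))‖ < ‖x (Sum.inl σ) - x (Sum.inr (j, t))‖) :
    ∃ (c : Fin n → EuclideanSpace ℝ (Fin d)) (β : Fin n → ℝ),
      (∀ i, c i ≠ 0) ∧
      ∀ σ ∈ S, ∃ p : EuclideanSpace ℝ (Fin d),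
        ∀ i, if σ i then β i < (inner ℝ (c i) p : ℝ) else (inner ℝ (c i) p : ℝ) < β i :=
  stmt_8_general d n S hplus x hx
end

section
/- Let S ⊆ {−,+}^n contain the all-plus and all-minus vectors, and suppose S is d-realisable by an arrangement of n oriented hyperplanes in ℝ^d. Then the profile V_S (with one voter per σ ∈ S whose order is {a_1,b_1} ≻ ⋯ ≻ {a_n,b_n} with a_i ≻ b_i iff σ_i = +) is d-Euclidean. -/
/-!
Put each voter `σ` at a point `p σ` of its cell, and put `a_i, b_i` at `q_i ± R_i u_i`, where
`q_i` lies on the `i`-th hyperplane and `u_i` is its unit normal. A point is closer to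
`q_i + R_i u_i` than to `q_i - R_i u_i` exactly when it lies on the positive side of the
hyperplane, which orders each pair `{a_i, b_i}` correctly. If every voter is within `M` of every
`q_i` and the radii grow by more than `2M` from one index to the next, every voter is closer to
both members of an earlier pair than to either member of a later one.
-/

open scoped RealInnerProductSpace

section Pole

variable {E : Type*} [SeminormedAddCommGroup E] [InnerProductSpace ℝ E]

def pole (q v : E) (r : ℝ) (b : Bool) : E := q + (if b then r else -r) • v

lemma dist_pole_left (q v : E) {r : ℝ} (hr : 0 ≤ r) (b : Bool) :
    dist (pole q v r b) q = r * ‖v‖ := by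
  cases b <;> simp [pole, norm_smul, abs_of_nonneg hr]

lemma norm_add_smul_sq_sub_norm_sub_smul_sq (w v : E) (r : ℝ) :
    ‖w + r • v‖ ^ 2 - ‖w - r • v‖ ^ 2 = 4 * r * ⟪v, w⟫ := by
  rw [norm_add_sq_real, norm_sub_sq_real, real_inner_smul_right, real_inner_comm]
  ring

lemma dist_pole_lt_dist_pole_not_iff (p q v : E) {r : ℝ} (hr : 0 < r) (b : Bool) :
    dist p (pole q v r b) < dist p (pole q v r !b) ↔
      if b then 0 < ⟪v, p - q⟫ else ⟪v, p - q⟫ < 0 := by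
  have key := norm_add_smul_sq_sub_norm_sub_smul_sq (p - q) v r
  have h_pos : p - pole q v r true = p - q - r • v := by rw [pole, if_pos rfl]; abel
  have h_neg : p - pole q v r false = p - q + r • v := by
    rw [pole, if_neg Bool.false_ne_true, neg_smul]; abel
  rw [dist_eq_norm, dist_eq_norm, ← sq_lt_sq₀ (norm_nonneg _) (norm_nonneg _)]
  cases b
  · rw [Bool.not_false, h_neg, h_pos, if_neg Bool.false_ne_true]
    constructor <;> intro h <;> nlinarith
  · rw [Bool.not_true, h_neg, h_pos, if_pos rfl]
    constructor <;> intro h <;> nlinarith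

end Pole

lemma exists_real_inner_eq {E : Type*} [NormedAddCommGroup E] [InnerProductSpace ℝ E]
    {c : E} (hc : c ≠ 0) (β : ℝ) : ∃ q : E, ⟪c, q⟫ = β :=
  ⟨(β / ⟪c, c⟫) • c, by
    rw [real_inner_smul_right, div_mul_cancel₀ _ ((real_inner_self_pos.mpr hc).ne')]⟩

lemma dist_lt_dist_of_dist_centres_le {X : Type*} [PseudoMetricSpace X] {p y z q q' : X} {M : ℝ}
    (hq : dist p q ≤ M) (hq' : dist p q' ≤ M) (h : dist y q + 2 * M < dist z q') :
    dist p y < dist p z := by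
  linarith [dist_triangle_right p y q, dist_triangle_left z q' p]

theorem stmt_9_general (d n : ℕ) (S : Set (Fin n → Bool))
    (c : Fin n → EuclideanSpace ℝ (Fin d)) (β : Fin n → ℝ) (hc : ∀ i, c i ≠ 0)
    (hreal : ∀ σ ∈ S, ∃ p : EuclideanSpace ℝ (Fin d),
      ∀ i, if σ i then β i < (inner ℝ (c i) p : ℝ) else (inner ℝ (c i) p : ℝ) < β i) :
    ∃ x : {σ // σ ∈ S} ⊕ (Fin n × Bool) → EuclideanSpace ℝ (Fin d),
      ∀ (σ : {σ // σ ∈ S}) (i j : Fin n) (s t : Bool),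
        (i < j ∨ (i = j ∧ s = σ.1 i ∧ t ≠ σ.1 i)) →
        ‖x (Sum.inl σ) - x (Sum.inr (i, s))‖ < ‖x (Sum.inl σ) - x (Sum.inr (j, t))‖ := by
  choose p hp using fun σ : {σ // σ ∈ S} => hreal σ.1 σ.2
  choose q hq using fun i => exists_real_inner_eq (hc i) (β i)
  obtain ⟨M, hM₀, hM⟩ : ∃ M, 0 ≤ M ∧ ∀ σ i, dist (p σ) (q i) ≤ M := by
    obtain ⟨M, hM⟩ := Finite.exists_le fun σi : {σ // σ ∈ S} × Fin n => dist (p σi.1) (q σi.2)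
    exact ⟨max M 0, le_max_right _ _, fun σ i => (hM (σ, i)).trans (le_max_left _ _)⟩
  set R : Fin n → ℝ := fun i => (i + 1) * (2 * M + 1)
  have hr : ∀ i, 0 < R i / ‖c i‖ := fun i => div_pos (by positivity) (norm_pos_iff.mpr (hc i))
  have hdist : ∀ i b, dist (pole (q i) (c i) (R i / ‖c i‖) b) (q i) = R i := fun i b => by
    rw [dist_pole_left _ _ (hr i).le, div_mul_cancel₀ _ (norm_ne_zero_iff.mpr (hc i))]
  refine ⟨Sum.elim p fun ib => pole (q ib.1) (c ib.1) (R ib.1 / ‖c ib.1‖) ib.2, ?_⟩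
  rintro σ i j s t (hij | ⟨rfl, rfl, ht⟩) <;>
    simp only [Sum.elim_inl, Sum.elim_inr, ← dist_eq_norm]
  · refine dist_lt_dist_of_dist_centres_le (hM σ i) (hM σ j) ?_
    have hij : (i : ℝ) + 1 ≤ j := by exact_mod_cast hij
    rw [hdist, hdist]
    nlinarith
  · rw [Bool.eq_not.mpr ht, dist_pole_lt_dist_pole_not_iff _ _ _ (hr i)]
    simpa only [inner_sub_right, hq, sub_pos, sub_neg] using hp σ i

/-- If S (containing the all-plus and all-minus vectors) is d-realisable by
an arrangement of n oriented affine hyperplanes, then the profile V_S (alternative a_i is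
(i, true), b_i is (i, false); voter σ prefers (i,s) to (j,t) iff i < j, or i = j with
s = σᵢ ≠ t) is d-Euclidean. -/
theorem stmt_9 (d n : ℕ) (S : Set (Fin n → Bool))
    (hplus : (fun _ => true) ∈ S) (hminus : (fun _ => false) ∈ S)
    (c : Fin n → EuclideanSpace ℝ (Fin d)) (β : Fin n → ℝ) (hc : ∀ i, c i ≠ 0)
    (hreal : ∀ σ ∈ S, ∃ p : EuclideanSpace ℝ (Fin d),
      ∀ i, if σ i then β i < (inner ℝ (c i) p : ℝ) else (inner ℝ (c i) p : ℝ) < β i) :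
    ∃ x : {σ // σ ∈ S} ⊕ (Fin n × Bool) → EuclideanSpace ℝ (Fin d),
      ∀ (σ : {σ // σ ∈ S}) (i j : Fin n) (s t : Bool),
        (i < j ∨ (i = j ∧ s = σ.1 i ∧ t ≠ σ.1 i)) →
        ‖x (Sum.inl σ) - x (Sum.inr (i, s))‖ < ‖x (Sum.inl σ) - x (Sum.inr (j, t))‖ :=
  stmt_9_general d n S c β hc hreal
end

section
/- Every d-Euclidean profile with respect to the ℓ∞-metric admits a witness structure checkable by linear constraints: a profile V over A is d-Euclidean w.r.t. ℓ∞ if and only if there exist, for each coordinate i ∈ {1,…,d}, real numbers x_{y,i} for y ranging over voters and alternatives, and for each voter–alternative pair (v,c) a coordinate k(v,c) and signs, such that the linear system d_{v,c} = ±(x_{v,k(v,c)} − x_{c,k(v,c)}), d_{v,c} ≥ |x_{v,i} − x_{c,i}| for all i, and d_{v,a} < d_{v,b} whenever a ≻_v b, is satisfiable. In particular, if any real solution exists then, since the witness guesses are finite and the remaining constraints are strict linear inequalities with rational coefficients, a rational solution exists. -/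
section Aux

variable {d : ℕ}

/-- The sup norm on `Fin d → ℝ` is attained at some coordinate. -/
lemma aux_norm_attained (hd : 1 ≤ d) (f : Fin d → ℝ) :
    ∃ i, ‖f‖ = |f i| := by
  haveI : Nonempty (Fin d) := ⟨⟨0, hd⟩⟩
  obtain ⟨i, -, hi⟩ := Finset.exists_mem_eq_sup' (Finset.univ_nonempty (α := Fin d))
    (fun i => |f i|)
  refine ⟨i, le_antisymm ?_ ?_⟩
  · rw [pi_norm_le_iff_of_nonneg (abs_nonneg _)]
    intro j
    have h := Finset.le_sup' (fun i => |f i|) (Finset.mem_univ j)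
    rw [hi] at h
    simpa [Real.norm_eq_abs] using h
  · simpa [Real.norm_eq_abs] using norm_le_pi_norm f i

lemma aux_norm_le (hd : 1 ≤ d) (f : Fin d → ℝ) (r : ℝ) (h : ∀ i, |f i| ≤ r) : ‖f‖ ≤ r := by
  have h0 : (0:ℝ) ≤ r := le_trans (abs_nonneg _) (h ⟨0, hd⟩)
  rw [pi_norm_le_iff_of_nonneg h0]
  simpa [Real.norm_eq_abs] using h

end Aux

/-- A finite profile is d-Euclidean w.r.t. the ℓ∞-metric (the sup norm on
`Fin d → ℝ`) iff there is a witness structure — an embedding together with, for each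
voter–alternative pair, a coordinate and a sign witnessing the maximum distance — whose
remaining conditions are linear constraints. In particular, if any real embedding exists
then a rational embedding exists. -/
theorem stmt_16 (d : ℕ) (hd : 1 ≤ d) (Voter A : Type) [Fintype Voter] [Fintype A]
    (pref : Voter → A → A → Prop) :
    ((∃ x : Voter ⊕ A → Fin d → ℝ, ∀ v a b, pref v a b →
        ‖x (Sum.inl v) - x (Sum.inr a)‖ < ‖x (Sum.inl v) - x (Sum.inr b)‖) ↔
      (∃ (x : Voter ⊕ A → Fin d → ℝ) (k : Voter → A → Fin d) (s : Voter → A → Bool)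
          (D : Voter → A → ℝ),
        (∀ v c, D v c =
          if s v c then x (Sum.inl v) (k v c) - x (Sum.inr c) (k v c)
          else x (Sum.inr c) (k v c) - x (Sum.inl v) (k v c)) ∧
        (∀ v c i, |x (Sum.inl v) i - x (Sum.inr c) i| ≤ D v c) ∧
        (∀ v a b, pref v a b → D v a < D v b))) ∧
    ((∃ x : Voter ⊕ A → Fin d → ℝ, ∀ v a b, pref v a b →
        ‖x (Sum.inl v) - x (Sum.inr a)‖ < ‖x (Sum.inl v) - x (Sum.inr b)‖) →
      ∃ q : Voter ⊕ A → Fin d → ℚ, ∀ v a b, pref v a b →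
        ‖(fun i => (q (Sum.inl v) i : ℝ)) - (fun i => (q (Sum.inr a) i : ℝ))‖ <
          ‖(fun i => (q (Sum.inl v) i : ℝ)) - (fun i => (q (Sum.inr b) i : ℝ))‖) := by
  classical
  constructor
  · constructor
    · rintro ⟨x, hx⟩
      choose k hk using fun v c => aux_norm_attained hd (x (Sum.inl v) - x (Sum.inr c))
      refine ⟨x, k, fun v c =>
        decide (x (Sum.inr c) (k v c) ≤ x (Sum.inl v) (k v c)),
        fun v c => ‖x (Sum.inl v) - x (Sum.inr c)‖, ?_, ?_, hx⟩
      · intro v c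
        have := hk v c
        simp only [Pi.sub_apply] at this
        by_cases h : x (Sum.inr c) (k v c) ≤ x (Sum.inl v) (k v c)
        · simp [h, this, abs_of_nonneg (sub_nonneg.2 h)]
        · push_neg at h
          simp [not_le.2 h, this, abs_of_neg (sub_neg.2 h)]
      · intro v c i
        simpa [Real.norm_eq_abs] using norm_le_pi_norm (x (Sum.inl v) - x (Sum.inr c)) i
    · rintro ⟨x, k, s, D, hD, hle, hlt⟩
      refine ⟨x, fun v a b hp => ?_⟩
      have h1 : ‖x (Sum.inl v) - x (Sum.inr a)‖ ≤ D v a := by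
        apply aux_norm_le hd
        intro i
        simpa using hle v a i
      have h2 : D v b ≤ ‖x (Sum.inl v) - x (Sum.inr b)‖ := by
        have habs : D v b ≤ |x (Sum.inl v) (k v b) - x (Sum.inr b) (k v b)| := by
          rw [hD v b]
          by_cases h : s v b = true
          · rw [if_pos h]; exact le_abs_self _
          · rw [if_neg h, abs_sub_comm]; exact le_abs_self _
        refine habs.trans ?_
        simpa [Real.norm_eq_abs] using norm_le_pi_norm (x (Sum.inl v) - x (Sum.inr b)) (k v b)
      exact lt_of_le_of_lt h1 (lt_of_lt_of_le (hlt v a b hp) h2)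
  · rintro ⟨x, hx⟩
    rcases isEmpty_or_nonempty (Voter × A × A) with hE | hNE
    · exact ⟨fun _ _ => 0, fun v a b _ => (hE.false (v, a, b)).elim⟩
    · set g : Voter × A × A → ℝ := fun t =>
        if pref t.1 t.2.1 t.2.2 then
          ‖x (Sum.inl t.1) - x (Sum.inr t.2.2)‖ - ‖x (Sum.inl t.1) - x (Sum.inr t.2.1)‖
        else 1 with hg
      have hgpos : ∀ t, 0 < g t := by
        intro t
        by_cases h : pref t.1 t.2.1 t.2.2
        · simp only [hg, if_pos h]
          exact sub_pos.2 (hx _ _ _ h)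
        · simp [hg, h]
      set ε : ℝ := Finset.univ.inf' (Finset.univ_nonempty (α := Voter × A × A)) g with hε
      have hεpos : 0 < ε := by
        rw [hε, Finset.lt_inf'_iff]
        exact fun t _ => hgpos t
      have hεle : ∀ v a b, pref v a b →
          ε ≤ ‖x (Sum.inl v) - x (Sum.inr b)‖ - ‖x (Sum.inl v) - x (Sum.inr a)‖ := by
        intro v a b hp
        have h : ε ≤ g (v, a, b) := Finset.inf'_le g (Finset.mem_univ _)
        simpa [hg, hp] using h
      -- choose rational approximations within ε/5
      have hch : ∀ (y : Voter ⊕ A) (i : Fin d), ∃ q : ℚ,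
          x y i - ε / 5 < q ∧ (q : ℝ) < x y i :=
        fun y i => exists_rat_btwn (by linarith [hεpos])
      choose q hq1 hq2 using hch
      have hclose : ∀ y, ‖(fun i => (q y i : ℝ)) - x y‖ ≤ ε / 5 := by
        intro y
        apply aux_norm_le hd
        intro i
        simp only [Pi.sub_apply]
        rw [abs_le]
        constructor <;> [linarith [hq1 y i] ; linarith [hq2 y i]]
      have key : ∀ (y z : Voter ⊕ A),
          |‖(fun i => (q y i : ℝ)) - (fun i => (q z i : ℝ))‖ - ‖x y - x z‖| ≤ 2 * (ε / 5) := by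
        intro y z
        have h := abs_norm_sub_norm_le
          ((fun i => (q y i : ℝ)) - (fun i => (q z i : ℝ))) (x y - x z)
        refine h.trans ?_
        have heq : ((fun i => (q y i : ℝ)) - fun i => (q z i : ℝ)) - (x y - x z)
            = ((fun i => (q y i : ℝ)) - x y) - ((fun i => (q z i : ℝ)) - x z) := by
          abel
        rw [heq]
        calc _ ≤ ‖(fun i => (q y i : ℝ)) - x y‖ + ‖(fun i => (q z i : ℝ)) - x z‖ :=
              norm_sub_le _ _
          _ ≤ ε / 5 + ε / 5 := add_le_add (hclose y) (hclose z)
          _ = 2 * (ε / 5) := by ring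
      refine ⟨q, fun v a b hp => ?_⟩
      have h1 := abs_le.1 (key (Sum.inl v) (Sum.inr a))
      have h2 := abs_le.1 (key (Sum.inl v) (Sum.inr b))
      have h3 := hεle v a b hp
      obtain ⟨h1a, h1b⟩ := h1
      obtain ⟨h2a, h2b⟩ := h2
      linarith
end

section
/- If a finite system of strict linear inequalities with rational coefficients in variables over ℝ has a real solution, then it has a rational solution. Consequently, every profile that is d-Euclidean with respect to the ℓ1-metric admits an embedding with all coordinates rational. -/
/-- Any nonempty open set in a real function space contains a rational point. -/
lemma open_has_rat_point {ι : Type*} {S : Set (ι → ℝ)} (hS : IsOpen S)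
    (hne : S.Nonempty) : ∃ q : ι → ℚ, (fun i => (q i : ℝ)) ∈ S := by
  have hdense : Dense (Set.pi (Set.univ : Set ι)
      (fun _ => Set.range ((↑) : ℚ → ℝ))) :=
    dense_pi Set.univ (fun i _ => Rat.denseRange_cast)
  obtain ⟨x, hx, hxS⟩ := hdense.exists_mem_open hS hne
  have hx' : ∀ i, ∃ q : ℚ, (q : ℝ) = x i := by
    intro i
    exact hx i (Set.mem_univ i)
  choose q hq using hx'
  refine ⟨q, ?_⟩
  have : (fun i => (q i : ℝ)) = x := funext hq
  rw [this]; exact hxS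

/-- (1) A finite system of strict linear inequalities with rational
coefficients that has a real solution has a rational solution. (2) Consequently, every
finite profile that is d-Euclidean w.r.t. the ℓ1-metric admits an embedding with all
coordinates rational. -/
theorem stmt_17 (m n d : ℕ) (Voter A : Type) [Fintype Voter] [Fintype A]
    (pref : Voter → A → A → Prop)
    (C : Fin m → Fin n → ℚ) (bnd : Fin m → ℚ) :
    ((∃ x : Fin n → ℝ, ∀ j, ∑ i, (C j i : ℝ) * x i < (bnd j : ℝ)) →
      ∃ q : Fin n → ℚ, ∀ j, ∑ i, C j i * q i < bnd j) ∧
    ((∃ x : Voter ⊕ A → Fin d → ℝ, ∀ v a b, pref v a b →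
        ∑ i, |x (Sum.inl v) i - x (Sum.inr a) i| <
          ∑ i, |x (Sum.inl v) i - x (Sum.inr b) i|) →
      ∃ q : Voter ⊕ A → Fin d → ℚ, ∀ v a b, pref v a b →
        ∑ i, |(q (Sum.inl v) i : ℝ) - (q (Sum.inr a) i : ℝ)| <
          ∑ i, |(q (Sum.inl v) i : ℝ) - (q (Sum.inr b) i : ℝ)|) := by
  constructor
  · rintro ⟨x, hx⟩
    set S : Set (Fin n → ℝ) := {y | ∀ j, ∑ i, (C j i : ℝ) * y i < (bnd j : ℝ)} with hSdef
    have hopen : IsOpen S := by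
      have : S = ⋂ j, {y : Fin n → ℝ | ∑ i, (C j i : ℝ) * y i < (bnd j : ℝ)} := by
        ext y; simp [hSdef]
      rw [this]
      refine isOpen_iInter_of_finite fun j => ?_
      exact isOpen_lt (by continuity) continuous_const
    obtain ⟨q, hq⟩ := open_has_rat_point hopen ⟨x, hx⟩
    refine ⟨q, fun j => ?_⟩
    have h2 : ∑ i, (C j i : ℝ) * (q i : ℝ) < (bnd j : ℝ) := hq j
    exact_mod_cast h2
  · rintro ⟨x, hx⟩
    set S : Set ((Voter ⊕ A) × Fin d → ℝ) := {y | ∀ v a b, pref v a b →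
      ∑ i, |y (Sum.inl v, i) - y (Sum.inr a, i)| <
        ∑ i, |y (Sum.inl v, i) - y (Sum.inr b, i)|} with hSdef
    have hopen : IsOpen S := by
      have : S = ⋂ v, ⋂ a, ⋂ b, {y : (Voter ⊕ A) × Fin d → ℝ | pref v a b →
          ∑ i, |y (Sum.inl v, i) - y (Sum.inr a, i)| <
            ∑ i, |y (Sum.inl v, i) - y (Sum.inr b, i)|} := by
        ext y; simp [hSdef]
      rw [this]
      refine isOpen_iInter_of_finite fun v => isOpen_iInter_of_finite fun a =>
        isOpen_iInter_of_finite fun b => ?_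
      by_cases h : pref v a b
      · have : {y : (Voter ⊕ A) × Fin d → ℝ | pref v a b →
            ∑ i, |y (Sum.inl v, i) - y (Sum.inr a, i)| <
              ∑ i, |y (Sum.inl v, i) - y (Sum.inr b, i)|} =
            {y : (Voter ⊕ A) × Fin d → ℝ |
            ∑ i, |y (Sum.inl v, i) - y (Sum.inr a, i)| <
              ∑ i, |y (Sum.inl v, i) - y (Sum.inr b, i)|} := by
          ext y; simp [h]
        rw [this]
        exact isOpen_lt (by continuity) (by continuity)
      · have : {y : (Voter ⊕ A) × Fin d → ℝ | pref v a b →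
            ∑ i, |y (Sum.inl v, i) - y (Sum.inr a, i)| <
              ∑ i, |y (Sum.inl v, i) - y (Sum.inr b, i)|} = Set.univ := by
          ext y; simp [h]
        rw [this]; exact isOpen_univ
    have hne : S.Nonempty := ⟨fun p => x p.1 p.2, fun v a b h => hx v a b h⟩
    obtain ⟨q, hq⟩ := open_has_rat_point hopen hne
    exact ⟨fun s i => q (s, i), fun v a b h => hq v a b h⟩
end
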